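/- arXiv:1905.09697 — 2 statements merged into one kernel-verified Lean document; each statement's English description precedes it below -/
import Mathlib

section
/- For any finitely generated S-module Y, regarded as an R-module via the surjection R → S, the first syzygy of Y over R satisfies Ω_R Y ≅ n^{⊕b} ⊕ Ω_S Y, where b = β_0^S(Y) is the minimal number of generators of Y over S, Ω_S Y is the first syzygy of Y in a minimal S-free resolution (regarded as an R-module via R → S), and n is regarded as an R-module via R → T. -/
open CategoryTheory Limits IsLocalRing

set_option synthInstance.maxHeartbeats 1000000
set_option maxHeartbeats 1000000

noncomputable section

/-- The fiber product `S ×ₖ T` as a subring of `S × T`. -/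
def fiberSubring {S T k : Type} [CommRing S] [CommRing T] [CommRing k]
    (πS : S →+* k) (πT : T →+* k) : Subring (S × T) where
  carrier := {x | πS x.1 = πT x.2}
  mul_mem' {a b} ha hb := by
    simp only [Set.mem_setOf_eq, Prod.fst_mul, Prod.snd_mul, map_mul] at *
    rw [ha, hb]
  one_mem' := by simp
  add_mem' {a b} ha hb := by
    simp only [Set.mem_setOf_eq, Prod.fst_add, Prod.snd_add, map_add] at *
    rw [ha, hb]
  zero_mem' := by simp
  neg_mem' {a} ha := by
    simp only [Set.mem_setOf_eq, Prod.fst_neg, Prod.snd_neg, map_neg] at *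
    rw [ha]

/-- The projection `R → S` from the fiber product. -/
def etaS {S T k : Type} [CommRing S] [CommRing T] [CommRing k]
    (πS : S →+* k) (πT : T →+* k) : ↥(fiberSubring πS πT) →+* S :=
  (RingHom.fst S T).comp (fiberSubring πS πT).subtype

/-- The projection `R → T` from the fiber product. -/
def etaT {S T k : Type} [CommRing S] [CommRing T] [CommRing k]
    (πS : S →+* k) (πT : T →+* k) : ↥(fiberSubring πS πT) →+* T :=
  (RingHom.snd S T).comp (fiberSubring πS πT).subtype

/-- Minimal number of generators of a module (`β₀`). -/
noncomputable def minGen (A : Type) [CommRing A] (M : Type) [AddCommGroup M] [Module A M] : ℕ :=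
  sInf {n | ∃ f : (Fin n → A) →ₗ[A] M, Function.Surjective f}

/-- A chosen minimal free cover of `M`. -/
noncomputable def minCover (A : Type) [CommRing A] (M : Type) [AddCommGroup M] [Module A M] :
    (Fin (minGen A M) → A) →ₗ[A] M :=
  by classical exact
    if h : ∃ f : (Fin (minGen A M) → A) →ₗ[A] M, Function.Surjective f then h.choose else 0

/-- The first syzygy of `M`, w.r.t. the chosen minimal free cover. -/
noncomputable def Syz (A : Type) [CommRing A] (M : Type) [AddCommGroup M] [Module A M] :
    Submodule A (Fin (minGen A M) → A) :=
  LinearMap.ker (minCover A M)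

/-- The first Betti number `β₁`. -/
noncomputable def beta1 (A : Type) [CommRing A] (M : Type) [AddCommGroup M] [Module A M] : ℕ :=
  minGen A ↥(Syz A M)

/-- `ProjDimLE A n M` means the projective dimension of `M` over `A` is at most `n`. -/
def ProjDimLE (A : Type) [CommRing A] : ℕ → ∀ (M : Type) [AddCommGroup M] [Module A M], Prop
  | 0, M, _, _ => Module.Projective A M
  | n + 1, M, _, _ =>
      ∃ (c : ℕ) (f : (Fin c → A) →ₗ[A] M), Function.Surjective f ∧
        ProjDimLE A n ↥(LinearMap.ker f)

/-- The depth of a module over a local ring, via vanishing of `Ext(k, M)`. -/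
noncomputable def moduleDepth (A : Type) [CommRing A] [IsLocalRing A]
    (M : Type) [AddCommGroup M] [Module A M] : ℕ∞ :=
  sInf {n : ℕ∞ | ∃ i : ℕ, n = i ∧ ¬ Limits.IsZero
    (((Ext A (ModuleCat A) i).obj (Opposite.op (ModuleCat.of A (ResidueField A)))).obj
      (ModuleCat.of A M))}

/-- `Tor` over the fiber product ring. -/
noncomputable abbrev TorFP {S T k : Type} [CommRing S] [CommRing T] [CommRing k]
    (πS : S →+* k) (πT : T →+* k) (n : ℕ)
    (M N : ModuleCat ↥(fiberSubring πS πT)) : ModuleCat ↥(fiberSubring πS πT) :=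
  ((Tor (ModuleCat ↥(fiberSubring πS πT)) n).obj M).obj N

/-- An `S`-module viewed as a module over the fiber product. -/
noncomputable abbrev ofS {S T k : Type} [CommRing S] [CommRing T] [CommRing k]
    (πS : S →+* k) (πT : T →+* k) (Y : Type) [AddCommGroup Y] [Module S Y] :
    ModuleCat ↥(fiberSubring πS πT) :=
  (ModuleCat.restrictScalars (etaS πS πT)).obj (ModuleCat.of S Y)

/-- A `T`-module viewed as a module over the fiber product. -/
noncomputable abbrev ofT {S T k : Type} [CommRing S] [CommRing T] [CommRing k]
    (πS : S →+* k) (πT : T →+* k) (Z : Type) [AddCommGroup Z] [Module T Z] :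
    ModuleCat ↥(fiberSubring πS πT) :=
  (ModuleCat.restrictScalars (etaT πS πT)).obj (ModuleCat.of T Z)

/-!
Since `R → S` is onto, `Y` needs as many generators over `R` as over `S`, so composing the
projection `R ^ b → S ^ b` with a minimal `S`-cover of `Y` gives a minimal `R`-cover. Over a local
ring the kernels of any two minimal covers are isomorphic: a lift of one through the other is onto
by Nakayama (the kernel of a minimal cover lies in `𝔪 • A ^ b`), hence bijective. The kernel of
our cover consists of the `x ∈ R ^ b` whose `S`-part is an `S`-syzygy; the coordinates of such a
syzygy lie in `𝔪_S`, so the `T`-part of `x` is an arbitrary element of `𝔫 ^ b`.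
-/

open Function Submodule

section MinimalCover

variable {A M : Type} [CommRing A] [AddCommGroup M] [Module A M]

theorem span_range_apply_basisFun_eq_top {n : ℕ} {f : (Fin n → A) →ₗ[A] M}
    (hf : Surjective f) : span A (Set.range fun i => f (Pi.basisFun A (Fin n) i)) = ⊤ := by
  rw [← (Pi.basisFun A (Fin n)).constr_range A, (Pi.basisFun A (Fin n)).constr_self,
    LinearMap.range_eq_top.2 hf]

theorem exists_surjective_iff_exists_span_eq_top {n : ℕ} :
    (∃ f : (Fin n → A) →ₗ[A] M, Surjective f) ↔ ∃ v : Fin n → M, span A (Set.range v) = ⊤ :=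
  ⟨fun ⟨_, hf⟩ => ⟨_, span_range_apply_basisFun_eq_top hf⟩, fun ⟨v, hv⟩ =>
    ⟨(Pi.basisFun A (Fin n)).constr A v, by
      rw [← LinearMap.range_eq_top, Module.Basis.constr_range, hv]⟩⟩

theorem minGen_eq_sInf_span :
    minGen A M = sInf {n | ∃ v : Fin n → M, span A (Set.range v) = ⊤} := by
  simp only [minGen, exists_surjective_iff_exists_span_eq_top]

theorem minGen_le_of_span_eq_top {n : ℕ} {v : Fin n → M} (hv : span A (Set.range v) = ⊤) :
    minGen A M ≤ n := by
  rw [minGen_eq_sInf_span]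
  exact Nat.sInf_le ⟨v, hv⟩

theorem exists_surjective_fin_minGen [Module.Finite A M] :
    ∃ f : (Fin (minGen A M) → A) →ₗ[A] M, Surjective f := by
  obtain ⟨n, v, hv⟩ := Module.Finite.exists_fin (R := A) (M := M)
  rw [minGen_eq_sInf_span, exists_surjective_iff_exists_span_eq_top]
  exact Nat.sInf_mem (s := {n | ∃ v : Fin n → M, span A (Set.range v) = ⊤}) ⟨n, v, hv⟩

theorem minCover_surjective [Module.Finite A M] : Surjective (minCover A M) := by
  have h := exists_surjective_fin_minGen (A := A) (M := M)
  unfold minCover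
  rw [dif_pos h]
  exact h.choose_spec

/-- If a relation had a unit coefficient, the corresponding generator could be dropped. -/
theorem not_isUnit_apply_of_mem_ker {n : ℕ} {f : (Fin n → A) →ₗ[A] M} (hn : minGen A M = n)
    (hf : Surjective f) {x : Fin n → A} (hx : x ∈ LinearMap.ker f) (i : Fin n) :
    ¬IsUnit (x i) := by
  intro hu
  obtain ⟨m, rfl⟩ := Nat.exists_eq_add_one_of_ne_zero i.pos.ne'
  set v : Fin (m + 1) → M := fun j => f (Pi.basisFun A (Fin (m + 1)) j)
  have hvi : v i ∈ span A (Set.range (v ∘ i.succAbove)) := by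
    have hrel : x i • v i = -∑ j, x (i.succAbove j) • v (i.succAbove j) := by
      rw [eq_neg_iff_add_eq_zero, ← Fin.sum_univ_succAbove (fun j => x j • v j) i]
      have hfx : f x = ∑ j, x j • v j := by
        conv_lhs => rw [← (Pi.basisFun A (Fin (m + 1))).sum_repr x]
        simp [v]
      rwa [LinearMap.mem_ker, hfx] at hx
    rw [← smul_mem_iff_of_isUnit _ hu, hrel]
    exact neg_mem (sum_mem fun j _ => smul_mem _ _ (subset_span ⟨j, rfl⟩))
  have hw : span A (Set.range (v ∘ i.succAbove)) = ⊤ := by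
    rw [eq_top_iff, ← span_range_apply_basisFun_eq_top hf, span_le]
    rintro _ ⟨j, rfl⟩
    rcases Fin.eq_self_or_eq_succAbove i j with rfl | ⟨l, rfl⟩
    · exact hvi
    · exact subset_span ⟨l, rfl⟩
  have := minGen_le_of_span_eq_top hw
  omega

end MinimalCover

section LocalRing

variable {A M : Type} [CommRing A] [IsLocalRing A] [AddCommGroup M] [Module A M]

theorem ker_le_maximalIdeal_smul_top {n : ℕ} {f : (Fin n → A) →ₗ[A] M} (hn : minGen A M = n)
    (hf : Surjective f) : LinearMap.ker f ≤ maximalIdeal A • (⊤ : Submodule A (Fin n → A)) := by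
  intro x hx
  rw [← (Pi.basisFun A (Fin n)).sum_repr x]
  refine sum_mem fun i _ => smul_mem_smul ?_ mem_top
  exact (mem_maximalIdeal _).2 (not_isUnit_apply_of_mem_ker hn hf hx i)

theorem nonempty_ker_equiv_ker_of_minGen_eq {n : ℕ} {f g : (Fin n → A) →ₗ[A] M}
    (hn : minGen A M = n) (hf : Surjective f) (hg : Surjective g) :
    Nonempty (LinearMap.ker f ≃ₗ[A] LinearMap.ker g) := by
  obtain ⟨φ, hφ⟩ := Module.projective_lifting_property g f hg
  have hφs : Surjective φ := by
    refine LinearMap.surjective_of_surjective_comp_mkQ φ (maximalIdeal A)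
      (jacobson_eq_maximalIdeal ⊥ bot_ne_top).ge ?_
    intro q
    obtain ⟨y, rfl⟩ := mkQ_surjective _ q
    obtain ⟨z, hz⟩ := hf (g y)
    refine ⟨z, (Submodule.Quotient.eq _).2 (ker_le_maximalIdeal_smul_top hn hg ?_)⟩
    rw [LinearMap.mem_ker, map_sub, ← LinearMap.comp_apply, hφ, hz, sub_self]
  let e := LinearEquiv.ofBijective φ
    ⟨OrzechProperty.injective_of_surjective_endomorphism φ hφs, hφs⟩
  refine ⟨e.ofSubmodules _ _ ?_⟩
  rw [← hφ, LinearMap.ker_comp]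
  exact map_comap_eq_of_surjective hφs _

theorem nonempty_syz_equiv_ker [Module.Finite A M] {n : ℕ} {g : (Fin n → A) →ₗ[A] M}
    (hn : minGen A M = n) (hg : Surjective g) : Nonempty (Syz A M ≃ₗ[A] LinearMap.ker g) := by
  subst hn
  exact nonempty_ker_equiv_ker_of_minGen_eq rfl minCover_surjective hg

theorem apply_mem_maximalIdeal_of_mem_syz [Module.Finite A M] {x : Fin (minGen A M) → A}
    (hx : x ∈ Syz A M) (i : Fin (minGen A M)) : x i ∈ maximalIdeal A :=
  (mem_maximalIdeal _).2 (not_isUnit_apply_of_mem_ker rfl minCover_surjective hx i)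

end LocalRing

theorem minGen_eq_of_surjective_algebraMap {A S M : Type} [CommRing A] [CommRing S] [Algebra A S]
    [AddCommGroup M] [Module S M] [Module A M] [IsScalarTower A S M]
    (hs : Surjective (algebraMap A S)) : minGen A M = minGen S M := by
  simp only [minGen_eq_sInf_span, ← restrictScalars_span A S hs, restrictScalars_eq_top_iff]

namespace fiberSubring

variable {S T k : Type} [CommRing S] [CommRing T] [Field k] {πS : S →+* k} {πT : T →+* k}

theorem etaS_surjective (hπT : Surjective πT) : Surjective (etaS πS πT) := fun s =>
  let ⟨t, ht⟩ := hπT (πS s)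
  ⟨⟨(s, t), ht.symm⟩, rfl⟩

theorem isUnit_of_map_ne_zero [IsLocalRing S] [IsLocalRing T]
    (hkS : RingHom.ker πS = maximalIdeal S) (hkT : RingHom.ker πT = maximalIdeal T)
    {x : fiberSubring πS πT} (hx : πS x.1.1 ≠ 0) : IsUnit x := by
  have hS : IsUnit x.1.1 := by
    by_contra h
    exact hx (by rw [← RingHom.mem_ker, hkS]; exact (mem_maximalIdeal _).2 h)
  have hT : IsUnit x.1.2 := by
    by_contra h
    exact hx (by rw [x.2, ← RingHom.mem_ker, hkT]; exact (mem_maximalIdeal _).2 h)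
  refine IsUnit.of_mul_eq_one ⟨(↑hS.unit⁻¹, ↑hT.unit⁻¹), ?_⟩ ?_
  · show πS _ = πT _
    rw [map_units_inv, map_units_inv, IsUnit.unit_spec, IsUnit.unit_spec]
    exact congrArg Inv.inv x.2
  · ext <;> simp

theorem isLocalRing [IsLocalRing S] [IsLocalRing T] (hkS : RingHom.ker πS = maximalIdeal S)
    (hkT : RingHom.ker πT = maximalIdeal T) : IsLocalRing (fiberSubring πS πT) := by
  have : Nontrivial (fiberSubring πS πT) :=
    nontrivial_of_ne 0 1 fun h => zero_ne_one (congrArg (fun z => z.1.1) h)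
  have hnonunit : ∀ x : fiberSubring πS πT, x ∈ nonunits _ ↔ πS x.1.1 = 0 := fun x =>
    ⟨not_imp_comm.1 (isUnit_of_map_ne_zero hkS hkT), fun hx hu =>
      (hu.map (πS.comp (etaS πS πT))).ne_zero hx⟩
  refine IsLocalRing.of_nonunits_add fun a b ha hb => ?_
  rw [hnonunit] at *
  show πS (a.1.1 + b.1.1) = 0
  rw [map_add, ha, hb, add_zero]

variable [Algebra (fiberSubring πS πT) S]

theorem mem_comap_compLeft_iff (hAS : algebraMap (fiberSubring πS πT) S = etaS πS πT) {b : ℕ}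
    {N : Submodule S (Fin b → S)} {x : Fin b → fiberSubring πS πT} :
    x ∈ (N.restrictScalars (fiberSubring πS πT)).comap
        ((Algebra.linearMap (fiberSubring πS πT) S).compLeft (Fin b)) ↔
      (fun i => (x i).1.1) ∈ N := by
  show (fun i => algebraMap _ S (x i)) ∈ N ↔ _
  rw [hAS]
  rfl

def comapCompLeftEquiv [IsLocalRing T] [Algebra (fiberSubring πS πT) T]
    (hAS : algebraMap (fiberSubring πS πT) S = etaS πS πT)
    (hAT : algebraMap (fiberSubring πS πT) T = etaT πS πT)
    (hkT : RingHom.ker πT = maximalIdeal T) {b : ℕ} (N : Submodule S (Fin b → S))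
    (hN : ∀ x ∈ N, ∀ i, πS (x i) = 0) :
    (N.restrictScalars (fiberSubring πS πT)).comap
        ((Algebra.linearMap (fiberSubring πS πT) S).compLeft (Fin b)) ≃ₗ[fiberSubring πS πT]
      (Fin b → maximalIdeal T) × N where
  toFun x := (fun i => ⟨(x.1 i).1.2, by
      rw [← hkT, RingHom.mem_ker, ← (x.1 i).2]
      exact hN _ ((mem_comap_compLeft_iff hAS).1 x.2) i⟩,
    ⟨fun i => (x.1 i).1.1, (mem_comap_compLeft_iff hAS).1 x.2⟩)
  invFun p := ⟨fun i => ⟨(p.2.1 i, (p.1 i).1), by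
      show πS _ = πT _
      rw [hN _ p.2.2 i, eq_comm, ← RingHom.mem_ker, hkT]
      exact (p.1 i).2⟩, (mem_comap_compLeft_iff hAS).2 p.2.2⟩
  map_add' _ _ := rfl
  map_smul' r x := by
    refine Prod.ext (funext fun i => Subtype.ext ?_) (Subtype.ext (funext fun i => ?_))
    · show r.1.2 * (x.1 i).1.2 = r • (x.1 i).1.2
      rw [Algebra.smul_def, hAT]
      rfl
    · show r.1.1 * (x.1 i).1.1 = r • (x.1 i).1.1
      rw [Algebra.smul_def, hAS]
      rfl
  left_inv _ := rfl
  right_inv _ := rfl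

end fiberSubring

theorem stmt2_general {S T k : Type} [CommRing S] [CommRing T] [Field k]
    [IsLocalRing S] [IsLocalRing T]
    (πS : S →+* k) (πT : T →+* k)
    (hπT : Function.Surjective πT)
    (hkS : RingHom.ker πS = maximalIdeal S) (hkT : RingHom.ker πT = maximalIdeal T)
    [Algebra ↥(fiberSubring πS πT) S] (hAS : algebraMap ↥(fiberSubring πS πT) S = etaS πS πT)
    [Algebra ↥(fiberSubring πS πT) T] (hAT : algebraMap ↥(fiberSubring πS πT) T = etaT πS πT)
    (Y : Type) [AddCommGroup Y] [Module S Y] [Module.Finite S Y] [Module ↥(fiberSubring πS πT) Y] [IsScalarTower ↥(fiberSubring πS πT) S Y] :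
    Nonempty ((↥(Syz ↥(fiberSubring πS πT) Y)) ≃ₗ[↥(fiberSubring πS πT)]
      ((Fin (minGen S Y) → ↥(maximalIdeal T)) × ↥(Syz S Y))) := by
  have := fiberSubring.isLocalRing hkS hkT
  have hRS : Surjective (algebraMap (fiberSubring πS πT) S) :=
    hAS ▸ fiberSubring.etaS_surjective hπT
  have := Module.Finite.of_surjective (Algebra.linearMap (fiberSubring πS πT) S) hRS
  have : Module.Finite (fiberSubring πS πT) Y := .trans S Y
  let ρ := (Algebra.linearMap (fiberSubring πS πT) S).compLeft (Fin (minGen S Y))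
  let g := ((minCover S Y).restrictScalars (fiberSubring πS πT)).comp ρ
  have hg : Surjective g := minCover_surjective.comp hRS.comp_left
  obtain ⟨e⟩ := nonempty_syz_equiv_ker (minGen_eq_of_surjective_algebraMap hRS) hg
  have hker : LinearMap.ker g = ((Syz S Y).restrictScalars (fiberSubring πS πT)).comap ρ := by
    rw [LinearMap.ker_comp, LinearMap.ker_restrictScalars]
    rfl
  have hSyz x (hx : x ∈ Syz S Y) i : πS (x i) = 0 := by
    rw [← RingHom.mem_ker, hkS]
    exact apply_mem_maximalIdeal_of_mem_syz hx i
  exact ⟨e.trans ((LinearEquiv.ofEq _ _ hker).trans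
    (fiberSubring.comapCompLeftEquiv hAS hAT hkT _ hSyz))⟩

theorem stmt2 {S T k : Type} [CommRing S] [CommRing T] [Field k]
    [IsLocalRing S] [IsLocalRing T] [IsNoetherianRing S] [IsNoetherianRing T]
    (πS : S →+* k) (πT : T →+* k)
    (hπS : Function.Surjective πS) (hπT : Function.Surjective πT)
    (hkS : RingHom.ker πS = maximalIdeal S) (hkT : RingHom.ker πT = maximalIdeal T)
    (hSk : maximalIdeal S ≠ ⊥) (hTk : maximalIdeal T ≠ ⊥)
    [Algebra ↥(fiberSubring πS πT) S] (hAS : algebraMap ↥(fiberSubring πS πT) S = etaS πS πT)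
    [Algebra ↥(fiberSubring πS πT) T] (hAT : algebraMap ↥(fiberSubring πS πT) T = etaT πS πT)
    (Y : Type) [AddCommGroup Y] [Module S Y] [Module.Finite S Y] [Module ↥(fiberSubring πS πT) Y] [IsScalarTower ↥(fiberSubring πS πT) S Y] :
    Nonempty ((↥(Syz ↥(fiberSubring πS πT) Y)) ≃ₗ[↥(fiberSubring πS πT)]
      ((Fin (minGen S Y) → ↥(maximalIdeal T)) × ↥(Syz S Y))) :=
  stmt2_general πS πT hπT hkS hkT hAS hAT Y
end
end

section
/- The depth of the fiber product satisfies depth R = min{depth S, depth T, 1}. -/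
open CategoryTheory Limits IsLocalRing

set_option synthInstance.maxHeartbeats 1000000
set_option maxHeartbeats 1000000

noncomputable section

/-!
A local ring has depth zero exactly when some nonzero element is killed by the maximal ideal.
For `s ≠ 0` in `S` killed by `𝔪_S` we have `s ∈ 𝔪_S` (as `𝔪_S ≠ 0`), so `(s, 0)` is such an element
of `R = S ×ₖ T`; conversely a nonzero component of such an element of `R` is one of `S` or of `T`.
This settles the case where `S` or `T` has depth zero. Otherwise `R` has positive depth, and
`Ext¹_R(k, R) ≠ 0` because the `R`-linear map `𝔪_R → R`, `(s, t) ↦ (s, 0)`, is not multiplication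
by any `y ∈ R`: testing it on `𝔪_S × 0` and `0 × 𝔪_T` forces `y = (1, 0)`, which is not in `R`.
Both `Ext` groups are read off the projective resolution of `k` obtained by splicing `R` with a
resolution of `𝔪_R`.
-/

universe u

namespace CategoryTheory.ProjectiveResolution

variable {C : Type*} [Category C] [Abelian C] {S : ShortComplex C}

def spliceComplex (Q : ProjectiveResolution S.X₁) : ChainComplex C ℕ :=
  Q.complex.augment (Q.π.f 0 ≫ S.f) ((Q.complex_d_comp_π_f_zero_assoc S.f).trans zero_comp)

lemma spliceComplex_exactAt_succ (hS : S.ShortExact) (Q : ProjectiveResolution S.X₁) (n : ℕ) :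
    (spliceComplex Q).ExactAt (n + 1) := by
  rw [HomologicalComplex.exactAt_iff' _ (n + 2) (n + 1) n (by simp) (by simp)]
  cases n with
  | zero =>
    let φ : ShortComplex.mk _ _ Q.complex_d_comp_π_f_zero ⟶ (spliceComplex Q).sc' 2 1 0 :=
      { τ₁ := 𝟙 _, τ₂ := 𝟙 _, τ₃ := S.f,
        comm₁₂ := (Category.id_comp _).trans (Category.comp_id _).symm,
        comm₂₃ := Category.id_comp _ }
    have : Epi φ.τ₁ := inferInstanceAs (Epi (𝟙 _))
    have : IsIso φ.τ₂ := inferInstanceAs (IsIso (𝟙 _))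
    have : Mono φ.τ₃ := hS.mono_f
    exact (ShortComplex.exact_iff_of_epi_of_isIso_of_mono φ).1 Q.exact₀
  | succ n => exact Q.exact_succ n

def ofShortExact (hS : S.ShortExact) [Projective S.X₂] (Q : ProjectiveResolution S.X₁) :
    ProjectiveResolution S.X₃ where
  complex := spliceComplex Q
  projective
    | 0 => ‹Projective S.X₂›
    | n + 1 => Q.projective n
  π := (ChainComplex.toSingle₀Equiv _ _).symm ⟨S.g, (Category.assoc _ _ _).trans <|
    (Q.π.f 0 ≫= S.zero).trans comp_zero⟩
  quasiIso := ⟨fun n => by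
    cases n with
    | zero =>
      rw [ChainComplex.quasiIsoAt₀_iff, ShortComplex.quasiIso_iff_of_zeros' _ rfl rfl rfl]
      let φ : ShortComplex.mk _ _ ((Category.assoc _ _ _).trans <|
          (Q.π.f 0 ≫= S.zero).trans comp_zero) ⟶ S :=
        { τ₁ := Q.π.f 0, τ₂ := 𝟙 _, τ₃ := 𝟙 _,
          comm₁₂ := (Category.comp_id _).symm,
          comm₂₃ := (Category.id_comp _).trans (Category.comp_id _).symm }
      have : Epi φ.τ₁ := inferInstanceAs (Epi (Q.π.f 0))
      have : IsIso φ.τ₂ := inferInstanceAs (IsIso (𝟙 _))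
      have : Mono φ.τ₃ := inferInstanceAs (Mono (𝟙 _))
      refine (ShortComplex.exact_and_epi_g_iff_of_iso ?_).2
        ⟨(ShortComplex.exact_iff_of_epi_of_isIso_of_mono φ).2 hS.exact, hS.epi_g⟩
      exact ShortComplex.isoMk (Iso.refl _) (Iso.refl _) (Iso.refl _)
        ((Category.id_comp _).trans (Category.comp_id _).symm)
        ((Category.id_comp _).trans ((Category.comp_id _).trans
          (ChainComplex.toSingle₀Equiv_symm_apply_f_zero (C := spliceComplex Q) S.g _)).symm)
    | succ n =>
      rw [quasiIsoAt_iff_exactAt' _ _ (ChainComplex.exactAt_succ_single_obj _ _)]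
      exact spliceComplex_exactAt_succ hS Q n⟩

end CategoryTheory.ProjectiveResolution

namespace ChainComplex

variable {R : Type*} [Ring R] {C : Type*} [Category C] [Abelian C] [Linear R C]

lemma linearYonedaObj_exactAt_zero_iff (K : ChainComplex C ℕ) (Y : C) :
    (K.linearYonedaObj R Y).ExactAt 0 ↔ ∀ φ : K.X 0 ⟶ Y, K.d 1 0 ≫ φ = 0 → φ = 0 := by
  rw [HomologicalComplex.exactAt_iff' _ 0 0 1 (by simp) (by simp),
    ShortComplex.moduleCat_exact_iff]
  have h00 : (K.linearYonedaObj R Y).d 0 0 = 0 := (K.linearYonedaObj R Y).shape 0 0 (by simp)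
  constructor
  · intro h φ hφ
    obtain ⟨ψ, rfl⟩ := h φ hφ
    exact congrArg (fun f => f.hom ψ) h00
  · intro h φ hφ
    exact ⟨0, (map_zero _).trans (h φ hφ).symm⟩

lemma linearYonedaObj_exactAt_succ_iff (K : ChainComplex C ℕ) (Y : C) (n : ℕ) :
    (K.linearYonedaObj R Y).ExactAt (n + 1) ↔
      ∀ φ : K.X (n + 1) ⟶ Y, K.d (n + 2) (n + 1) ≫ φ = 0 →
        ∃ χ : K.X n ⟶ Y, K.d (n + 1) n ≫ χ = φ := by
  rw [HomologicalComplex.exactAt_iff' _ n (n + 1) (n + 2) (by simp) (by simp),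
    ShortComplex.moduleCat_exact_iff]
  exact Iff.rfl

end ChainComplex

namespace CategoryTheory.ShortComplex.ShortExact

variable {R : Type*} [Ring R] {C : Type*} [Category C] [Abelian C] [Linear R C]
  [EnoughProjectives C] {S : ShortComplex C}

lemma isZero_Ext_zero_iff (hS : S.ShortExact) [Projective S.X₂] (Y : C) :
    IsZero (((Ext R C 0).obj (Opposite.op S.X₃)).obj Y) ↔
      ∀ χ : S.X₂ ⟶ Y, S.f ≫ χ = 0 → χ = 0 := by
  let Q := ProjectiveResolution.of S.X₁
  rw [(ProjectiveResolution.ofShortExact hS Q).isoExt 0 Y |>.isZero_iff,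
    ← HomologicalComplex.exactAt_iff_isZero_homology,
    ChainComplex.linearYonedaObj_exactAt_zero_iff]
  refine forall_congr' fun χ => imp_congr_left ⟨fun h => ?_, fun h => ?_⟩
  · exact (cancel_epi (Q.π.f 0)).1 ((Category.assoc _ _ _).symm.trans (h.trans comp_zero.symm))
  · exact (Category.assoc _ _ _).trans ((Q.π.f 0 ≫= h).trans comp_zero)

lemma exists_comp_eq_of_isZero_Ext_one (hS : S.ShortExact) [Projective S.X₂] (Y : C)
    (h : IsZero (((Ext R C 1).obj (Opposite.op S.X₃)).obj Y))
    (ψ : S.X₁ ⟶ Y) : ∃ χ : S.X₂ ⟶ Y, S.f ≫ χ = ψ := by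
  let Q := ProjectiveResolution.of S.X₁
  rw [(ProjectiveResolution.ofShortExact hS Q).isoExt 1 Y |>.isZero_iff,
    ← HomologicalComplex.exactAt_iff_isZero_homology,
    ChainComplex.linearYonedaObj_exactAt_succ_iff] at h
  obtain ⟨χ, hχ⟩ := h (Q.π.f 0 ≫ ψ) ((Q.complex_d_comp_π_f_zero_assoc ψ).trans zero_comp)
  exact ⟨χ, (cancel_epi (Q.π.f 0)).1 ((Category.assoc _ _ _).symm.trans hχ)⟩

end CategoryTheory.ShortComplex.ShortExact

namespace IsLocalRing

variable {A : Type u} [CommRing A] [IsLocalRing A]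

variable (A) in
abbrev residueShortComplex : ShortComplex (ModuleCat.{u} A) :=
  ShortComplex.mk (ModuleCat.ofHom (maximalIdeal A).subtype)
    (ModuleCat.ofHom (Algebra.linearMap A (ResidueField A)))
    (by ext x; exact (residue_eq_zero_iff _).2 x.2)

lemma residueShortComplex_shortExact : (residueShortComplex A).ShortExact :=
  ModuleCat.shortComplex_shortExact _
    (fun x => (residue_eq_zero_iff x).trans ⟨fun hx => ⟨⟨x, hx⟩, rfl⟩, fun ⟨y, hy⟩ => hy ▸ y.2⟩)
    Subtype.val_injective residue_surjective

lemma isZero_Ext_zero_residueField_iff (M : Type u) [AddCommGroup M] [Module A M] :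
    IsZero (((Ext A (ModuleCat.{u} A) 0).obj (Opposite.op (ModuleCat.of A (ResidueField A)))).obj
      (ModuleCat.of A M)) ↔ Submodule.torsionBySet A M (maximalIdeal A) = ⊥ := by
  simp only [Submodule.eq_bot_iff, Submodule.mem_torsionBySet_iff, Subtype.forall, SetLike.mem_coe]
  refine (residueShortComplex_shortExact.isZero_Ext_zero_iff _).trans
    ⟨fun h y hy => ?_, fun h χ hχ => ?_⟩
  · have := h (ModuleCat.ofHom (LinearMap.toSpanSingleton A M y)) (by ext x; exact hy x x.2)
    simpa using congr(ModuleCat.Hom.hom $this (1 : A))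
  · have hy : χ.hom (1 : A) = 0 := h _ fun a ha => by
      rw [← map_smul, smul_eq_mul, mul_one]
      exact congr(ModuleCat.Hom.hom $hχ ⟨a, ha⟩)
    ext
    simpa using hy

lemma not_isZero_Ext_one_residueField {M : Type u} [AddCommGroup M] [Module A M]
    (ψ : maximalIdeal A →ₗ[A] M) (hψ : ¬ ∃ y : M, ∀ x : maximalIdeal A, ψ x = (x : A) • y) :
    ¬ IsZero (((Ext A (ModuleCat.{u} A) 1).obj (Opposite.op (ModuleCat.of A (ResidueField A)))).obj
      (ModuleCat.of A M)) := by
  intro h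
  obtain ⟨χ, hχ⟩ :=
    residueShortComplex_shortExact.exists_comp_eq_of_isZero_Ext_one _ h (ModuleCat.ofHom ψ)
  refine hψ ⟨χ.hom (1 : A), fun x => ?_⟩
  rw [← map_smul, smul_eq_mul, mul_one]
  exact congr(ModuleCat.Hom.hom $hχ x).symm

end IsLocalRing

section Depth

variable {A : Type} [CommRing A] [IsLocalRing A] {M : Type} [AddCommGroup M] [Module A M]

lemma moduleDepth_le_of_not_isZero {i : ℕ}
    (h : ¬ IsZero (((Ext A (ModuleCat A) i).obj (Opposite.op (ModuleCat.of A (ResidueField A)))).obj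
      (ModuleCat.of A M))) :
    moduleDepth A M ≤ i :=
  sInf_le ⟨i, rfl, h⟩

lemma one_le_moduleDepth
    (h : IsZero (((Ext A (ModuleCat A) 0).obj (Opposite.op (ModuleCat.of A (ResidueField A)))).obj
      (ModuleCat.of A M))) :
    1 ≤ moduleDepth A M := by
  refine le_sInf ?_
  rintro _ ⟨i, rfl, hi⟩
  rcases i with _ | i
  · exact absurd h hi
  · exact_mod_cast i.succ_pos

lemma moduleDepth_eq_zero_iff :
    moduleDepth A M = 0 ↔ Submodule.torsionBySet A M (maximalIdeal A) ≠ ⊥ := by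
  rw [ne_eq, ← isZero_Ext_zero_residueField_iff]
  refine ⟨fun h h0 => ?_, fun h => nonpos_iff_eq_zero.1 (moduleDepth_le_of_not_isZero h)⟩
  simpa [h] using one_le_moduleDepth h0

lemma moduleDepth_eq_one (h0 : Submodule.torsionBySet A M (maximalIdeal A) = ⊥)
    (ψ : maximalIdeal A →ₗ[A] M) (hψ : ¬ ∃ y : M, ∀ x : maximalIdeal A, ψ x = (x : A) • y) :
    moduleDepth A M = 1 :=
  le_antisymm (moduleDepth_le_of_not_isZero (not_isZero_Ext_one_residueField ψ hψ))
    (one_le_moduleDepth ((isZero_Ext_zero_residueField_iff M).2 h0))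

end Depth

lemma Submodule.mem_torsionBySet_self_iff {A : Type*} [CommRing A] {I : Ideal A} {y : A} :
    y ∈ torsionBySet A A I ↔ ∀ a ∈ I, a * y = 0 := by
  simp [mem_torsionBySet_iff]

lemma IsLocalRing.torsionBySet_maximalIdeal_le {A : Type*} [CommRing A] [IsLocalRing A]
    (hm : maximalIdeal A ≠ ⊥) :
    Submodule.torsionBySet A A (maximalIdeal A) ≤ maximalIdeal A := by
  intro y hy
  by_contra hy'
  obtain ⟨u, rfl⟩ := notMem_maximalIdeal.1 hy'
  refine hm ((Submodule.eq_bot_iff _).2 fun a ha => ?_)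
  simpa using congr($(Submodule.mem_torsionBySet_self_iff.1 hy a ha) * ↑u⁻¹)

section FiberProduct

variable {S T k : Type} [CommRing S] [CommRing T] [CommRing k] {πS : S →+* k} {πT : T →+* k}

lemma mem_fiberSubring {x : S × T} : x ∈ fiberSubring πS πT ↔ πS x.1 = πT x.2 := Iff.rfl

lemma mk_zero_mem_fiberSubring [IsLocalRing S] (hkS : RingHom.ker πS = maximalIdeal S) {s : S}
    (hs : s ∈ maximalIdeal S) : (s, (0 : T)) ∈ fiberSubring πS πT := by
  rw [mem_fiberSubring, map_zero, ← RingHom.mem_ker, hkS]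
  exact hs

lemma zero_mk_mem_fiberSubring [IsLocalRing T] (hkT : RingHom.ker πT = maximalIdeal T) {t : T}
    (ht : t ∈ maximalIdeal T) : ((0 : S), t) ∈ fiberSubring πS πT := by
  rw [mem_fiberSubring, map_zero, eq_comm, ← RingHom.mem_ker, hkT]
  exact ht

variable [IsLocalRing S] [IsLocalRing T]

lemma fst_mem_maximalIdeal_iff_snd (hkS : RingHom.ker πS = maximalIdeal S)
    (hkT : RingHom.ker πT = maximalIdeal T) (x : fiberSubring πS πT) :
    (x : S × T).1 ∈ maximalIdeal S ↔ (x : S × T).2 ∈ maximalIdeal T := by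
  rw [← hkS, ← hkT, RingHom.mem_ker, RingHom.mem_ker, mem_fiberSubring.1 x.2]

lemma isUnit_fiberSubring_iff (hkS : RingHom.ker πS = maximalIdeal S)
    (hkT : RingHom.ker πT = maximalIdeal T) {x : fiberSubring πS πT} :
    IsUnit x ↔ IsUnit (x : S × T).1 := by
  refine ⟨fun hx => hx.map (etaS πS πT), fun hx₁ => ?_⟩
  have hx₂ : IsUnit (x : S × T).2 := notMem_maximalIdeal.1 fun h =>
    notMem_maximalIdeal.2 hx₁ ((fst_mem_maximalIdeal_iff_snd hkS hkT x).2 h)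
  set u := hx₁.unit
  set v := hx₂.unit
  have huv : Units.map πS.toMonoidHom u = Units.map πT.toMonoidHom v :=
    Units.ext (by simpa [u, v] using mem_fiberSubring.1 x.2)
  have hinv : (((u⁻¹ : Sˣ) : S), ((v⁻¹ : Tˣ) : T)) ∈ fiberSubring πS πT :=
    congr(((($huv)⁻¹ : kˣ) : k))
  refine IsUnit.of_mul_eq_one (b := ⟨_, hinv⟩) (Subtype.ext (Prod.ext ?_ ?_))
  · exact hx₁.mul_val_inv
  · exact hx₂.mul_val_inv

variable [IsLocalRing (fiberSubring πS πT)]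

lemma mem_maximalIdeal_fiberSubring_iff (hkS : RingHom.ker πS = maximalIdeal S)
    (hkT : RingHom.ker πT = maximalIdeal T) (x : fiberSubring πS πT) :
    x ∈ maximalIdeal (fiberSubring πS πT) ↔ (x : S × T).1 ∈ maximalIdeal S := by
  rw [mem_maximalIdeal, mem_nonunits_iff, isUnit_fiberSubring_iff hkS hkT, ← notMem_maximalIdeal,
    not_not]

lemma mem_maximalIdeal_fiberSubring_iff_snd (hkS : RingHom.ker πS = maximalIdeal S)
    (hkT : RingHom.ker πT = maximalIdeal T) (x : fiberSubring πS πT) :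
    x ∈ maximalIdeal (fiberSubring πS πT) ↔ (x : S × T).2 ∈ maximalIdeal T := by
  rw [mem_maximalIdeal_fiberSubring_iff hkS hkT, fst_mem_maximalIdeal_iff_snd hkS hkT]

lemma torsionBySet_fiberSubring_eq_bot (hkS : RingHom.ker πS = maximalIdeal S)
    (hkT : RingHom.ker πT = maximalIdeal T)
    (hS : Submodule.torsionBySet S S (maximalIdeal S) = ⊥)
    (hT : Submodule.torsionBySet T T (maximalIdeal T) = ⊥) :
    Submodule.torsionBySet (fiberSubring πS πT) (fiberSubring πS πT)
      (maximalIdeal (fiberSubring πS πT)) = ⊥ := by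
  simp only [Submodule.eq_bot_iff, Submodule.mem_torsionBySet_self_iff] at hS hT ⊢
  intro y hy
  refine Subtype.ext (Prod.ext (hS _ fun a ha => ?_) (hT _ fun b hb => ?_))
  · let x : fiberSubring πS πT := ⟨(a, 0), mk_zero_mem_fiberSubring hkS ha⟩
    exact congr(($(hy x ((mem_maximalIdeal_fiberSubring_iff hkS hkT x).2 ha)) : S × T).1)
  · let x : fiberSubring πS πT := ⟨(0, b), zero_mk_mem_fiberSubring hkT hb⟩
    exact congr(($(hy x ((mem_maximalIdeal_fiberSubring_iff_snd hkS hkT x).2 hb)) : S × T).2)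

lemma torsionBySet_fiberSubring_ne_bot_of_fst (hkS : RingHom.ker πS = maximalIdeal S)
    (hkT : RingHom.ker πT = maximalIdeal T) (hSk : maximalIdeal S ≠ ⊥)
    (hS : Submodule.torsionBySet S S (maximalIdeal S) ≠ ⊥) :
    Submodule.torsionBySet (fiberSubring πS πT) (fiberSubring πS πT)
      (maximalIdeal (fiberSubring πS πT)) ≠ ⊥ := by
  obtain ⟨y, hy, hy0⟩ := Submodule.exists_mem_ne_zero_of_ne_bot hS
  let x : fiberSubring πS πT :=
    ⟨(y, 0), mk_zero_mem_fiberSubring hkS (torsionBySet_maximalIdeal_le hSk hy)⟩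
  refine (Submodule.ne_bot_iff _).2 ⟨x, Submodule.mem_torsionBySet_self_iff.2 fun r hr => ?_,
    fun h => hy0 congr(($h : S × T).1)⟩
  rw [mem_maximalIdeal_fiberSubring_iff hkS hkT] at hr
  exact Subtype.ext (Prod.ext (Submodule.mem_torsionBySet_self_iff.1 hy _ hr) (mul_zero _))

lemma torsionBySet_fiberSubring_ne_bot_of_snd (hkS : RingHom.ker πS = maximalIdeal S)
    (hkT : RingHom.ker πT = maximalIdeal T) (hTk : maximalIdeal T ≠ ⊥)
    (hT : Submodule.torsionBySet T T (maximalIdeal T) ≠ ⊥) :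
    Submodule.torsionBySet (fiberSubring πS πT) (fiberSubring πS πT)
      (maximalIdeal (fiberSubring πS πT)) ≠ ⊥ := by
  obtain ⟨y, hy, hy0⟩ := Submodule.exists_mem_ne_zero_of_ne_bot hT
  let x : fiberSubring πS πT :=
    ⟨(0, y), zero_mk_mem_fiberSubring hkT (torsionBySet_maximalIdeal_le hTk hy)⟩
  refine (Submodule.ne_bot_iff _).2 ⟨x, Submodule.mem_torsionBySet_self_iff.2 fun r hr => ?_,
    fun h => hy0 congr(($h : S × T).2)⟩
  rw [mem_maximalIdeal_fiberSubring_iff_snd hkS hkT] at hr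
  exact Subtype.ext (Prod.ext (mul_zero _) (Submodule.mem_torsionBySet_self_iff.1 hy _ hr))

def fstOfMaximalIdeal (hkS : RingHom.ker πS = maximalIdeal S)
    (hkT : RingHom.ker πT = maximalIdeal T) :
    maximalIdeal (fiberSubring πS πT) →ₗ[fiberSubring πS πT] fiberSubring πS πT where
  toFun x := ⟨(((x : fiberSubring πS πT) : S × T).1, 0),
    mk_zero_mem_fiberSubring hkS ((mem_maximalIdeal_fiberSubring_iff hkS hkT _).1 x.2)⟩
  map_add' _ _ := Subtype.ext (Prod.ext rfl (add_zero 0).symm)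
  map_smul' _ _ := Subtype.ext (Prod.ext rfl (mul_zero _).symm)

lemma not_exists_fstOfMaximalIdeal_eq_smul [Nontrivial k] (hkS : RingHom.ker πS = maximalIdeal S)
    (hkT : RingHom.ker πT = maximalIdeal T)
    (hS : Submodule.torsionBySet S S (maximalIdeal S) = ⊥)
    (hT : Submodule.torsionBySet T T (maximalIdeal T) = ⊥) :
    ¬ ∃ y : fiberSubring πS πT, ∀ x : maximalIdeal (fiberSubring πS πT),
      fstOfMaximalIdeal hkS hkT x = (x : fiberSubring πS πT) • y := by
  rintro ⟨y, hy⟩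
  have h1 : 1 - (y : S × T).1 = 0 := (Submodule.eq_bot_iff _).1 hS _ <|
    Submodule.mem_torsionBySet_self_iff.2 fun a ha => by
      let x : fiberSubring πS πT := ⟨(a, 0), mk_zero_mem_fiberSubring hkS ha⟩
      have hx : a = a * (y : S × T).1 :=
        congr(($(hy ⟨x, (mem_maximalIdeal_fiberSubring_iff hkS hkT x).2 ha⟩) : S × T).1)
      rw [mul_sub, mul_one, ← hx, sub_self]
  have h2 : (y : S × T).2 = 0 := (Submodule.eq_bot_iff _).1 hT _ <|
    Submodule.mem_torsionBySet_self_iff.2 fun b hb => by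
      let x : fiberSubring πS πT := ⟨(0, b), zero_mk_mem_fiberSubring hkT hb⟩
      have hx := hy ⟨x, (mem_maximalIdeal_fiberSubring_iff_snd hkS hkT x).2 hb⟩
      exact congr(($hx : S × T).2).symm
  have hy := mem_fiberSubring.1 y.2
  rw [← sub_eq_zero.1 h1, h2, map_one, map_zero] at hy
  exact one_ne_zero hy

lemma moduleDepth_fiberSubring_eq_zero_iff (hkS : RingHom.ker πS = maximalIdeal S)
    (hkT : RingHom.ker πT = maximalIdeal T) (hSk : maximalIdeal S ≠ ⊥) (hTk : maximalIdeal T ≠ ⊥) :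
    moduleDepth (fiberSubring πS πT) (fiberSubring πS πT) = 0 ↔
      moduleDepth S S = 0 ∨ moduleDepth T T = 0 := by
  simp only [moduleDepth_eq_zero_iff]
  refine ⟨fun h => ?_, ?_⟩
  · by_contra! h'
    exact h (torsionBySet_fiberSubring_eq_bot hkS hkT h'.1 h'.2)
  · rintro (h | h)
    exacts [torsionBySet_fiberSubring_ne_bot_of_fst hkS hkT hSk h,
      torsionBySet_fiberSubring_ne_bot_of_snd hkS hkT hTk h]

lemma moduleDepth_fiberSubring_eq_one [Nontrivial k] (hkS : RingHom.ker πS = maximalIdeal S)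
    (hkT : RingHom.ker πT = maximalIdeal T) (hS : moduleDepth S S ≠ 0) (hT : moduleDepth T T ≠ 0) :
    moduleDepth (fiberSubring πS πT) (fiberSubring πS πT) = 1 := by
  rw [ne_eq, moduleDepth_eq_zero_iff, not_not] at hS hT
  exact moduleDepth_eq_one (torsionBySet_fiberSubring_eq_bot hkS hkT hS hT) _
    (not_exists_fstOfMaximalIdeal_eq_smul hkS hkT hS hT)

end FiberProduct

theorem stmt16_general {S T k : Type} [CommRing S] [CommRing T] [Field k]
    [IsLocalRing S] [IsLocalRing T]
    (πS : S →+* k) (πT : T →+* k)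
    (hkS : RingHom.ker πS = maximalIdeal S) (hkT : RingHom.ker πT = maximalIdeal T)
    (hSk : maximalIdeal S ≠ ⊥) (hTk : maximalIdeal T ≠ ⊥) [IsLocalRing ↥(fiberSubring πS πT)] :
    moduleDepth ↥(fiberSubring πS πT) ↥(fiberSubring πS πT) = min (min (moduleDepth S S) (moduleDepth T T)) 1 := by
  by_cases h : moduleDepth S S = 0 ∨ moduleDepth T T = 0
  · rw [(moduleDepth_fiberSubring_eq_zero_iff hkS hkT hSk hTk).2 h]
    rcases h with h | h <;> simp [h]
  · rw [not_or] at h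
    rw [moduleDepth_fiberSubring_eq_one hkS hkT h.1 h.2, min_eq_right
      (le_min (Order.one_le_iff_ne_zero.2 h.1) (Order.one_le_iff_ne_zero.2 h.2))]

theorem stmt16 {S T k : Type} [CommRing S] [CommRing T] [Field k]
    [IsLocalRing S] [IsLocalRing T] [IsNoetherianRing S] [IsNoetherianRing T]
    (πS : S →+* k) (πT : T →+* k)
    (hπS : Function.Surjective πS) (hπT : Function.Surjective πT)
    (hkS : RingHom.ker πS = maximalIdeal S) (hkT : RingHom.ker πT = maximalIdeal T)
    (hSk : maximalIdeal S ≠ ⊥) (hTk : maximalIdeal T ≠ ⊥) [IsLocalRing ↥(fiberSubring πS πT)] :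
    moduleDepth ↥(fiberSubring πS πT) ↥(fiberSubring πS πT) = min (min (moduleDepth S S) (moduleDepth T T)) 1 :=
  stmt16_general πS πT hkS hkT hSk hTk
end
end
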